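/- Under the hypotheses of the differential weakening rule, the Hoare triple {(D → I) ∧ (¬D → Q)} ⟨ẋ = e & D⟩ {Q} holds. Concretely: let D be an open predicate with closure D̄ and boundary ∂D, suppose I is an invariant of ẋ = e under domain D̄, and suppose every state satisfying ∂D ∧ I satisfies Q. Then for any starting state x₀ satisfying (D x₀ → I x₀) and (¬D x₀ → Q x₀): if ¬D x₀, then Q x₀; and if D x₀ and γ : [0,T] → ℝⁿ is a continuous differentiable solution of ẋ = e with γ(0) = x₀, γ(t) ∈ D for t ∈ [0,T), and γ(T) ∉ D, then Q(γ(T)). -/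
import Mathlib
open Topology


/-- `Q` is an invariant of the ODE `ẋ = e` under domain `P` (here a set). -/
def ODEInvSet {n : ℕ} (P : Set (EuclideanSpace ℝ (Fin n)))
    (e : EuclideanSpace ℝ (Fin n) → EuclideanSpace ℝ (Fin n))
    (Q : EuclideanSpace ℝ (Fin n) → Prop) : Prop :=
  ∀ (T : ℝ), 0 ≤ T → ∀ γ : ℝ → EuclideanSpace ℝ (Fin n),
    (∀ t ∈ Set.Icc (0:ℝ) T, HasDerivAt γ (e (γ t)) t) →
    (∀ t ∈ Set.Icc (0:ℝ) T, γ t ∈ P) → Q (γ 0) →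
    ∀ t ∈ Set.Icc (0:ℝ) T, Q (γ t)

/-- Soundness of the differential weakening rule (dW). -/
theorem dW {n : ℕ} (D : Set (EuclideanSpace ℝ (Fin n))) (hD : IsOpen D)
    (e : EuclideanSpace ℝ (Fin n) → EuclideanSpace ℝ (Fin n))
    (I Q : EuclideanSpace ℝ (Fin n) → Prop)
    (hinv : ODEInvSet (closure D) e I)
    (hbd : ∀ x ∈ closure D \ D, I x → Q x)
    (x₀ : EuclideanSpace ℝ (Fin n))
    (hpre₁ : x₀ ∈ D → I x₀) (hpre₂ : x₀ ∉ D → Q x₀) :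
    (x₀ ∉ D → Q x₀) ∧
    (x₀ ∈ D → ∀ (T : ℝ), 0 ≤ T → ∀ γ : ℝ → EuclideanSpace ℝ (Fin n),
      ContinuousOn γ (Set.Icc (0:ℝ) T) →
      (∀ t ∈ Set.Icc (0:ℝ) T, HasDerivAt γ (e (γ t)) t) →
      γ 0 = x₀ → (∀ t ∈ Set.Ico (0:ℝ) T, γ t ∈ D) → γ T ∉ D →
      Q (γ T)) := by
  refine ⟨hpre₂, ?_⟩
  intro hx T hT γ hcont hderiv h0 hIco hnT
  -- T ≠ 0
  have hTpos : 0 < T := by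
    rcases hT.lt_or_eq with h | h
    · exact h
    · exfalso; exact hnT (by rw [← h, h0] at *; exact hx)
  -- γ t ∈ closure D for all t ∈ Icc 0 T
  have hclos : ∀ t ∈ Set.Icc (0:ℝ) T, γ t ∈ closure D := by
    intro t ht
    rcases eq_or_lt_of_le ht.2 with h | h
    · subst h
      have hne : (𝓝[Set.Ico (0:ℝ) t] t).NeBot := by
        apply mem_closure_iff_nhdsWithin_neBot.mp
        rw [closure_Ico (by linarith : (0:ℝ) ≠ t)]
        exact ht
      have htend : Filter.Tendsto γ (𝓝[Set.Ico (0:ℝ) t] t) (𝓝 (γ t)) :=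
        ((hcont t ht).mono Set.Ico_subset_Icc_self).tendsto
      exact mem_closure_of_tendsto htend
        (Filter.eventually_of_mem self_mem_nhdsWithin hIco)
    · exact subset_closure (hIco t ⟨ht.1, h⟩)
  have hI : I (γ T) := by
    refine hinv T hT γ hderiv hclos ?_ T ⟨hT, le_refl T⟩
    rw [h0]; exact hpre₁ hx
  exact hbd (γ T) ⟨hclos T ⟨hT, le_refl T⟩, hnT⟩ hI
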